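/- arXiv:2109.06542 — 4 statements merged into one kernel-verified Lean document; each statement's English description precedes it below -/
import Mathlib

section
/- Let A ⊆ C ⊆ B be integral extensions of commutative rings. Then the extension A ⊆ B is subintegral if and only if both extensions A ⊆ C and C ⊆ B are subintegral. -/
attribute [instance] Localization.isLocalHom_localRingHom

/-- An integral extension of commutative rings `f : A →+* B` is *subintegral* if the induced
map `Spec B → Spec A` is bijective and, for every prime `q` of `B` lying over `p = q ∩ A`,
the induced map of residue fields `κ(p) → κ(q)` is an isomorphism (i.e. bijective). -/
def RingHom.IsSubintegral {A B : Type*} [CommRing A] [CommRing B] (f : A →+* B) : Prop :=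
  f.IsIntegral ∧
  Function.Bijective (PrimeSpectrum.comap f) ∧
  ∀ (q : Ideal B) [q.IsPrime],
    Function.Bijective
      (IsLocalRing.ResidueField.map (Localization.localRingHom (q.comap f) q f rfl))

/-- Composition criterion for bijectivity when both maps are injective. -/
lemma aux_bij_comp_iff_inj {α β γ : Type*} {v : α → β} {u : β → γ}
    (hu : Function.Injective u) (hv : Function.Injective v) :
    Function.Bijective (u ∘ v) ↔ Function.Bijective u ∧ Function.Bijective v := by
  constructor
  · intro h
    have hvs : Function.Surjective v := fun y => by
      obtain ⟨x, hx⟩ := h.2 (u y); exact ⟨x, hu hx⟩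
    refine ⟨⟨hu, fun z => ?_⟩, ⟨hv, hvs⟩⟩
    obtain ⟨x, hx⟩ := h.2 z
    exact ⟨v x, hx⟩
  · rintro ⟨h1, h2⟩; exact h1.comp h2

/-- Composition criterion for bijectivity when both maps are surjective. -/
lemma aux_bij_comp_iff_surj {α β γ : Type*} {v : α → β} {u : β → γ}
    (hu : Function.Surjective u) (hv : Function.Surjective v) :
    Function.Bijective (u ∘ v) ↔ Function.Bijective u ∧ Function.Bijective v := by
  constructor
  · intro h
    have hvi : Function.Injective v := fun a b hab => h.1 (by simp [Function.comp, hab])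
    refine ⟨⟨fun b1 b2 hb => ?_, hu⟩, ⟨hvi, hv⟩⟩
    obtain ⟨a1, rfl⟩ := hv b1
    obtain ⟨a2, rfl⟩ := hv b2
    exact congrArg v (h.1 hb)
  · rintro ⟨h1, h2⟩; exact h1.comp h2

/-- Lying over: `Spec` map of an injective integral ring map is surjective. -/
lemma aux_comap_surjective {A B : Type*} [CommRing A] [CommRing B]
    (f : A →+* B) (hf : Function.Injective f) (hfi : f.IsIntegral) :
    Function.Surjective (PrimeSpectrum.comap f) := by
  intro p
  letI : Algebra A B := f.toAlgebra
  haveI : Algebra.IsIntegral A B := ⟨hfi⟩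
  obtain ⟨Q, -, hQ, hQc⟩ := Ideal.exists_ideal_over_prime_of_isIntegral
    (R := A) (S := B) p.asIdeal ⊥ (fun x hx => by
      have h0 : f x = 0 := (by simpa using hx : algebraMap A B x = 0)
      have : x = 0 := hf (by simpa using h0)
      simp [this])
  exact ⟨⟨Q, hQ⟩, PrimeSpectrum.ext hQc⟩

/-- Decomposition of the residue field map of a composite. -/
lemma aux_residue_decomp {A C B : Type*} [CommRing A] [CommRing C] [CommRing B]
    (f : A →+* C) (g : C →+* B) (q : Ideal B) [q.IsPrime] :
    ⇑(IsLocalRing.ResidueField.map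
        (Localization.localRingHom (q.comap (g.comp f)) q (g.comp f) rfl)) =
      ⇑(IsLocalRing.ResidueField.map (Localization.localRingHom (q.comap g) q g rfl)) ∘
      ⇑(IsLocalRing.ResidueField.map
          (Localization.localRingHom ((q.comap g).comap f) (q.comap g) f rfl)) := by
  have e : Localization.localRingHom (q.comap (g.comp f)) q (g.comp f) rfl
      = (Localization.localRingHom (q.comap g) q g rfl).comp
        (Localization.localRingHom ((q.comap g).comap f) (q.comap g) f rfl) :=
    Localization.localRingHom_comp ((q.comap g).comap f) (q.comap g) q f rfl g rfl
  simp only [e, IsLocalRing.ResidueField.map_comp]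
  funext x; exact (IsLocalRing.ResidueField.map_map
    (Localization.localRingHom ((q.comap g).comap f) (q.comap g) f rfl)
    (Localization.localRingHom (q.comap g) q g rfl) x).symm

/-- **Transitivity of subintegrality.** Let `A ⊆ C ⊆ B` be integral extensions of commutative
rings. Then `A ⊆ B` is subintegral if and only if both `A ⊆ C` and `C ⊆ B` are subintegral. -/
theorem subintegral_comp_iff {A C B : Type*} [CommRing A] [CommRing C] [CommRing B]
    (f : A →+* C) (g : C →+* B)
    (hf : Function.Injective f) (hg : Function.Injective g)
    (hfi : f.IsIntegral) (hgi : g.IsIntegral) :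
    (g.comp f).IsSubintegral ↔ f.IsSubintegral ∧ g.IsSubintegral := by
  have hfs : Function.Surjective (PrimeSpectrum.comap f) := aux_comap_surjective f hf hfi
  have hgs : Function.Surjective (PrimeSpectrum.comap g) := aux_comap_surjective g hg hgi
  have hcomp : (PrimeSpectrum.comap (g.comp f))
      = (PrimeSpectrum.comap f) ∘ (PrimeSpectrum.comap g) := by
    funext x; rfl
  constructor
  · rintro ⟨hi, hbij, hres⟩
    rw [hcomp] at hbij
    obtain ⟨hbf, hbg⟩ := (aux_bij_comp_iff_surj hfs hgs).mp hbij
    refine ⟨⟨hfi, hbf, ?_⟩, ⟨hgi, hbg, ?_⟩⟩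
    · intro r _
      obtain ⟨Q, hQ⟩ := hgs ⟨r, ‹_›⟩
      have e : Q.asIdeal.comap g = r := congrArg PrimeSpectrum.asIdeal hQ
      subst e
      have h := hres Q.asIdeal
      rw [aux_residue_decomp f g Q.asIdeal] at h
      exact ((aux_bij_comp_iff_inj (RingHom.injective _) (RingHom.injective _)).mp h).2
    · intro q _
      have h := hres q
      rw [aux_residue_decomp f g q] at h
      exact ((aux_bij_comp_iff_inj (RingHom.injective _) (RingHom.injective _)).mp h).1
  · rintro ⟨⟨_, hbf, hresf⟩, ⟨_, hbg, hresg⟩⟩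
    refine ⟨RingHom.IsIntegral.trans f g hfi hgi, ?_, ?_⟩
    · rw [hcomp]; exact hbf.comp hbg
    · intro q _
      rw [aux_residue_decomp f g q]
      exact (hresg q).comp (hresf (q.comap g))
end

section
/- Let A ⊆ B be an integral extension of commutative rings. Then the extension A ⊆ A⁺_B is subintegral, i.e. the induced map Spec(A⁺_B) → Spec(A) is bijective and induces isomorphisms on all residue fields. -/
/-- The seminormalization (Traverso) of `A` in `B`, for a ring extension `f : A →+* B`,
as a subset of `B`: the set of `b ∈ B` such that for every prime `p` of `A`, the image of
`b` in the localization `B_p` (at the multiplicative set `A \ p`) lies in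
`A_p + Rad(B_p)`, where `Rad` is the Jacobson radical. -/
def seminormalizationSet {A B : Type*} [CommRing A] [CommRing B] (f : A →+* B) : Set B :=
  { b | ∀ (p : Ideal A) [p.IsPrime],
      ∃ (a : Localization.AtPrime p) (r : Localization (p.primeCompl.map f)),
        r ∈ (⊥ : Ideal (Localization (p.primeCompl.map f))).jacobson ∧
        algebraMap B (Localization (p.primeCompl.map f)) b =
          IsLocalization.map (Localization (p.primeCompl.map f)) f
            (Submonoid.le_comap_map p.primeCompl) a + r }

theorem aux_lyingOver {R S : Type*} [CommRing R] [CommRing S] (φ : R →+* S)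
    (hφ : φ.IsIntegral) (hinj : Function.Injective φ) (P : Ideal R) [P.IsPrime] :
    ∃ Q : Ideal S, Q.IsPrime ∧ Q.comap φ = P := by
  letI := φ.toAlgebra
  haveI : Algebra.IsIntegral R S := ⟨hφ⟩
  obtain ⟨Q, -, hQp, hQc⟩ := Ideal.exists_ideal_over_prime_of_isIntegral P ⊥ (by
    rw [show algebraMap R S = φ from rfl, ← RingHom.ker_eq_comap_bot,
      (RingHom.injective_iff_ker_eq_bot φ).mp hinj]
    exact bot_le)
  exact ⟨Q, hQp, hQc⟩

/-- Integrality of the induced map on localizations, `RingHom` version with flexible targets. -/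
theorem aux_locIntegral {R S Rm Sm : Type*} [CommRing R] [CommRing S] [CommRing Rm] [CommRing Sm]
    (φ : R →+* S) (hφ : φ.IsIntegral) (M : Submonoid R)
    [Algebra R Rm] [Algebra S Sm] [IsLocalization M Rm] {N : Submonoid S}
    (hN : N = M.map φ) [IsLocalization N Sm]
    (ψ : Rm →+* Sm) (hψ : ψ.comp (algebraMap R Rm) = (algebraMap S Sm).comp φ) :
    ψ.IsIntegral := by
  subst hN
  letI := φ.toAlgebra
  haveI : Algebra.IsIntegral R S := ⟨hφ⟩
  haveI : IsLocalization (Algebra.algebraMapSubmonoid S M) Sm :=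
    inferInstanceAs (IsLocalization (M.map φ) Sm)
  have h := isIntegral_localization (R := R) (S := S) (M := M) (Rₘ := Rm) (Sₘ := Sm)
  have heq : ψ = IsLocalization.map Sm (algebraMap R S)
      (show M ≤ (Algebra.algebraMapSubmonoid S M).comap _ from M.le_comap_map) := by
    apply IsLocalization.ringHom_ext M
    rw [hψ, IsLocalization.map_comp]
    rfl
  rw [heq]
  exact h

section Basic
variable {A B : Type*} [CommRing A] [CommRing B] (f : A →+* B)
  (C : Subring B) (g : A →+* C)

theorem aux_comp (hg : ∀ a : A, (g a : B) = f a) : C.subtype.comp g = f := RingHom.ext hg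

theorem aux_g_injective (hg : ∀ a : A, (g a : B) = f a) (hf : Function.Injective f) :
    Function.Injective g := by
  intro a b h
  apply hf
  rw [← hg, ← hg, h]

theorem aux_g_integral (hg : ∀ a : A, (g a : B) = f a) (hfi : f.IsIntegral) : g.IsIntegral := by
  intro c
  obtain ⟨P, hm, he⟩ := hfi (c : B)
  refine ⟨P, hm, ?_⟩
  have h0 : C.subtype (Polynomial.eval₂ g c P) = 0 := by
    rw [Polynomial.hom_eval₂, aux_comp f C g hg]
    exact he
  exact Subtype.coe_injective (by simpa using h0)

theorem aux_subtype_integral (hg : ∀ a : A, (g a : B) = f a) (hfi : f.IsIntegral) :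
    C.subtype.IsIntegral := by
  intro b
  obtain ⟨P, hm, he⟩ := hfi b
  refine ⟨P.map g, hm.map g, ?_⟩
  rw [Polynomial.eval₂_map, aux_comp f C g hg]
  exact he

theorem aux_Meq (hg : ∀ a : A, (g a : B) = f a) (p : Ideal A) [p.IsPrime] :
    (p.primeCompl.map g).map C.subtype = p.primeCompl.map f := by
  ext x
  constructor
  · rintro ⟨-, ⟨u, hu, rfl⟩, rfl⟩
    exact ⟨u, hu, (hg u).symm⟩
  · rintro ⟨u, hu, rfl⟩
    exact ⟨g u, ⟨u, hu, rfl⟩, hg u⟩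

theorem aux_le (hg : ∀ a : A, (g a : B) = f a) (p : Ideal A) [p.IsPrime] :
    p.primeCompl.map g ≤ Submonoid.comap C.subtype (p.primeCompl.map f) := by
  rintro _ ⟨u, hu, rfl⟩
  refine Submonoid.mem_comap.mpr ?_
  rw [show C.subtype (g u) = f u from hg u]
  exact Submonoid.mem_map_of_mem f hu

end Basic

section Decomp
variable {A B : Type*} [CommRing A] [CommRing B] (f : A →+* B)
  (C : Subring B) (g : A →+* C)

theorem aux_kA_integral (hg : ∀ a : A, (g a : B) = f a) (hfi : f.IsIntegral)
    (p : Ideal A) [p.IsPrime] :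
    (IsLocalization.map (Localization (p.primeCompl.map g)) g
      (Submonoid.le_comap_map p.primeCompl) :
        Localization.AtPrime p →+* Localization (p.primeCompl.map g)).IsIntegral :=
  aux_locIntegral g (aux_g_integral f C g hg hfi) p.primeCompl rfl _
    (IsLocalization.map_comp _)

theorem aux_decomp (hf : Function.Injective f) (hfi : f.IsIntegral)
    (hC : (C : Set B) = seminormalizationSet f)
    (hg : ∀ a : A, (g a : B) = f a) (p : Ideal A) [p.IsPrime] :
    ∀ x : Localization (p.primeCompl.map g), ∃ a : Localization.AtPrime p,
      x - IsLocalization.map (Localization (p.primeCompl.map g)) g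
        (Submonoid.le_comap_map p.primeCompl) a ∈
        (⊥ : Ideal (Localization (p.primeCompl.map g))).jacobson := by
  set Ap := Localization.AtPrime p
  set Cp := Localization (p.primeCompl.map g)
  set Bp := Localization (p.primeCompl.map f)
  set kA : Ap →+* Cp :=
    IsLocalization.map Cp g (Submonoid.le_comap_map p.primeCompl) with hkA
  set jA : Ap →+* Bp :=
    IsLocalization.map Bp f (Submonoid.le_comap_map p.primeCompl) with hjA
  set jC : Cp →+* Bp := IsLocalization.map Bp C.subtype (aux_le f C g hg p) with hjC
  haveI hinstB : IsLocalization ((p.primeCompl.map g).map C.subtype) Bp := by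
    rw [aux_Meq f C g hg p]; infer_instance
  have hjC_inj : Function.Injective jC := by
    have hsubinj : Function.Injective C.subtype := Subtype.coe_injective
    have h := IsLocalization.map_injective_of_injective (p.primeCompl.map g) Cp Bp hsubinj
    exact h
  have hjC_int : jC.IsIntegral :=
    aux_locIntegral C.subtype (aux_subtype_integral f C g hg hfi) (p.primeCompl.map g)
      (aux_Meq f C g hg p).symm jC (IsLocalization.map_comp _)
  have hcomp : jC.comp kA = jA := by
    apply IsLocalization.ringHom_ext p.primeCompl
    ext x
    simp only [RingHom.coe_comp, Function.comp_apply, hkA, hjA]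
    rw [IsLocalization.map_eq, IsLocalization.map_eq, IsLocalization.map_eq]
    rw [show C.subtype (g x) = f x from hg x]
  -- first: the claim for elements of the form `algebraMap C Cp c`
  have main : ∀ c : C, ∃ a : Ap, algebraMap C Cp c - kA a ∈ (⊥ : Ideal Cp).jacobson := by
    intro c
    have hc : (c : B) ∈ seminormalizationSet f := by rw [← hC]; exact c.2
    obtain ⟨a, r, hr, heq⟩ := hc p
    refine ⟨a, ?_⟩
    have hjCc' : jC (algebraMap C Cp c - kA a) = r := by
      rw [map_sub]
      rw [show jC (kA a) = jA a from DFunLike.congr_fun hcomp a]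
      rw [show jC (algebraMap C Cp c) = algebraMap B Bp (C.subtype c) from
        IsLocalization.map_eq _ c]
      rw [show (algebraMap B Bp) (C.subtype c) = jA a + r from heq]
      ring
    rw [Ideal.jacobson]
    rw [Ideal.mem_sInf]
    rintro J ⟨-, hJmax⟩
    haveI : J.IsPrime := hJmax.isPrime
    obtain ⟨Q, hQp, hQc⟩ := aux_lyingOver jC hjC_int hjC_inj J
    haveI := hQp
    obtain ⟨M', hM'max, hQM'⟩ := Q.exists_le_maximal hQp.ne_top
    have hrM' : r ∈ M' := by
      rw [Ideal.jacobson, Ideal.mem_sInf] at hr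
      exact hr ⟨bot_le, hM'max⟩
    have hJM' : J = M'.comap jC := by
      refine hJmax.eq_of_le (Ideal.comap_ne_top jC hM'max.ne_top) ?_
      rw [← hQc]
      exact Ideal.comap_mono hQM'
    rw [hJM', Ideal.mem_comap, hjCc']
    exact hrM'
  intro x
  obtain ⟨⟨c, s⟩, rfl⟩ := IsLocalization.mk'_surjective (p.primeCompl.map g) x
  obtain ⟨u, hu, hus⟩ := s.2
  obtain ⟨a, ha⟩ := main c
  have hv : IsUnit (algebraMap A Ap u) := IsLocalization.map_units Ap ⟨u, hu⟩
  refine ⟨a * ↑hv.unit⁻¹, ?_⟩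
  have hw : algebraMap C Cp ↑s * kA ↑hv.unit⁻¹ = 1 := by
    rw [show algebraMap C Cp ↑s = kA (algebraMap A Ap u) from by
      rw [hkA, IsLocalization.map_eq, hus]]
    rw [← map_mul, IsUnit.mul_val_inv, map_one]
  have heq2 : IsLocalization.mk' Cp c s - kA (a * ↑hv.unit⁻¹)
      = (algebraMap C Cp c - kA a) * kA ↑hv.unit⁻¹ := by
    rw [show IsLocalization.mk' Cp c s - kA (a * ↑hv.unit⁻¹)
        = (IsLocalization.mk' Cp c s * (algebraMap C Cp ↑s * kA ↑hv.unit⁻¹))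
          - kA a * kA ↑hv.unit⁻¹ from by rw [hw, mul_one, map_mul]]
    rw [← mul_assoc, IsLocalization.mk'_spec, sub_mul]
  rw [heq2]
  exact Ideal.mul_mem_right _ _ ha

end Decomp

section Unique
variable {A B : Type*} [CommRing A] [CommRing B] (f : A →+* B)
  (C : Subring B) (g : A →+* C)

theorem aux_comap_max (hg : ∀ a : A, (g a : B) = f a) (hfi : f.IsIntegral)
    (p : Ideal A) [p.IsPrime] (m : Ideal (Localization (p.primeCompl.map g)))
    (hm : m.IsMaximal) :
    m.comap (IsLocalization.map (Localization (p.primeCompl.map g)) g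
      (Submonoid.le_comap_map p.primeCompl) :
        Localization.AtPrime p →+* Localization (p.primeCompl.map g))
      = IsLocalRing.maximalIdeal (Localization.AtPrime p) := by
  haveI := hm
  exact IsLocalRing.eq_maximalIdeal
    (Ideal.isMaximal_comap_of_isIntegral_of_isMaximal' _ (aux_kA_integral f C g hg hfi p) m)

theorem aux_max_unique (hf : Function.Injective f) (hfi : f.IsIntegral)
    (hC : (C : Set B) = seminormalizationSet f)
    (hg : ∀ a : A, (g a : B) = f a) (p : Ideal A) [p.IsPrime]
    (m₁ m₂ : Ideal (Localization (p.primeCompl.map g)))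
    (hm₁ : m₁.IsMaximal) (hm₂ : m₂.IsMaximal) : m₁ = m₂ := by
  have key : ∀ m₁' m₂' : Ideal (Localization (p.primeCompl.map g)),
      m₁'.IsMaximal → m₂'.IsMaximal → m₁' ≤ m₂' := by
    intro m₁' m₂' hm₁' hm₂' x hx
    set kA := (IsLocalization.map (Localization (p.primeCompl.map g)) g
      (Submonoid.le_comap_map p.primeCompl) :
        Localization.AtPrime p →+* Localization (p.primeCompl.map g))
    obtain ⟨a, ha⟩ := aux_decomp f C g hf hfi hC hg p x
    rw [Ideal.jacobson, Ideal.mem_sInf] at ha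
    have hrad₁ : x - kA a ∈ m₁' := ha ⟨bot_le, hm₁'⟩
    have hrad₂ : x - kA a ∈ m₂' := ha ⟨bot_le, hm₂'⟩
    have hkam₁ : kA a ∈ m₁' := by
      have := m₁'.sub_mem hx hrad₁
      simpa using this
    have ha' : a ∈ m₁'.comap kA := hkam₁
    rw [aux_comap_max f C g hg hfi p m₁' hm₁',
      ← aux_comap_max f C g hg hfi p m₂' hm₂'] at ha'
    have hkam₂ : kA a ∈ m₂' := ha'
    have := m₂'.add_mem hkam₂ hrad₂
    simpa using this
  exact le_antisymm (key m₁ m₂ hm₁ hm₂) (key m₂ m₁ hm₂ hm₁)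

end Unique

set_option maxHeartbeats 1000000
set_option synthInstance.maxHeartbeats 400000

/-- Let `A ⊆ B` be an integral extension of commutative rings. Then the extension
`A ⊆ A⁺_B` is subintegral, where `A⁺_B` is the seminormalization of `A` in `B`:
for any subring `C` of `B` whose underlying set is the seminormalization of `A` in `B`,
and any ring homomorphism `g : A →+* C` compatible with `f`, the extension `g` is
subintegral. -/
theorem subintegral_seminormalization {A B : Type*} [CommRing A] [CommRing B]
    (f : A →+* B) (hf : Function.Injective f) (hfi : f.IsIntegral)
    (C : Subring B) (hC : (C : Set B) = seminormalizationSet f)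
    (g : A →+* C) (hg : ∀ a : A, (g a : B) = f a) :
    g.IsSubintegral := by
  have hgi : g.IsIntegral := aux_g_integral f C g hg hfi
  have hginj : Function.Injective g := aux_g_injective f C g hg hf
  refine ⟨hgi, ⟨?_, ?_⟩, ?_⟩
  · -- injectivity of Spec map
    intro x y hxy
    have hxy' : x.asIdeal.comap g = y.asIdeal.comap g := by
      rw [← PrimeSpectrum.comap_asIdeal, ← PrimeSpectrum.comap_asIdeal, hxy]
    haveI := x.isPrime
    haveI := y.isPrime
    set p := x.asIdeal.comap g with hp
    haveI : p.IsPrime := Ideal.IsPrime.comap g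
    set Ap := Localization.AtPrime p
    set Cp := Localization (p.primeCompl.map g)
    set kA : Ap →+* Cp :=
      IsLocalization.map Cp g (Submonoid.le_comap_map p.primeCompl) with hkA
    have hkAint : kA.IsIntegral := aux_kA_integral f C g hg hfi p
    have hdisj₁ : Disjoint ((p.primeCompl.map g : Submonoid C) : Set C) (x.asIdeal : Set C) := by
      rw [Set.disjoint_left]
      rintro s ⟨u, hu, rfl⟩ hmem
      exact hu hmem
    have hdisj₂ : Disjoint ((p.primeCompl.map g : Submonoid C) : Set C) (y.asIdeal : Set C) := by
      rw [Set.disjoint_left]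
      rintro s ⟨u, hu, rfl⟩ hmem
      apply hu
      rw [hxy']
      exact hmem
    set Q₁ := x.asIdeal.map (algebraMap C Cp) with hQ₁
    set Q₂ := y.asIdeal.map (algebraMap C Cp) with hQ₂
    have hQ₁p : Q₁.IsPrime :=
      IsLocalization.isPrime_of_isPrime_disjoint (p.primeCompl.map g) Cp x.asIdeal x.isPrime hdisj₁
    have hQ₂p : Q₂.IsPrime :=
      IsLocalization.isPrime_of_isPrime_disjoint (p.primeCompl.map g) Cp y.asIdeal y.isPrime hdisj₂
    have hQ₁c : Q₁.comap (algebraMap C Cp) = x.asIdeal :=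
      IsLocalization.comap_map_of_isPrime_disjoint (p.primeCompl.map g) Cp
        x.isPrime hdisj₁
    have hQ₂c : Q₂.comap (algebraMap C Cp) = y.asIdeal :=
      IsLocalization.comap_map_of_isPrime_disjoint (p.primeCompl.map g) Cp
        y.isPrime hdisj₂
    have hcompAC : kA.comp (algebraMap A Ap) = (algebraMap C Cp).comp g :=
      IsLocalization.map_comp _
    have key : ∀ Q : Ideal Cp, Q.IsPrime → (Q.comap (algebraMap C Cp)).comap g = p →
        Q.IsMaximal := by
      intro Q hQprime hQp
      haveI := hQprime
      have h1 : (Q.comap kA).comap (algebraMap A Ap) = p := by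
        rw [Ideal.comap_comap, hcompAC, ← Ideal.comap_comap]
        exact hQp
      have h2 : Q.comap kA = Ideal.map (algebraMap A Ap) p := by
        have h5 := congrArg (Ideal.map (algebraMap A Ap)) h1
        rw [IsLocalization.map_comap p.primeCompl Ap] at h5
        exact h5
      have h3 : IsLocalRing.maximalIdeal Ap = Ideal.map (algebraMap A Ap) p := by
        have h4 := congrArg (Ideal.map (algebraMap A Ap))
          (IsLocalization.AtPrime.comap_maximalIdeal Ap p)
        rw [IsLocalization.map_comap p.primeCompl Ap] at h4
        exact h4
      refine Ideal.isMaximal_of_isIntegral_of_isMaximal_comap' kA hkAint Q ?_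
      rw [h2, ← h3]
      exact IsLocalRing.maximalIdeal.isMaximal _
    have hQ₁max : Q₁.IsMaximal := key Q₁ hQ₁p (by rw [hQ₁c])
    have hQ₂max : Q₂.IsMaximal := key Q₂ hQ₂p (by rw [hQ₂c, ← hxy'])
    have hQeq : Q₁ = Q₂ := aux_max_unique f C g hf hfi hC hg p Q₁ Q₂ hQ₁max hQ₂max
    apply PrimeSpectrum.ext
    rw [← hQ₁c, ← hQ₂c, hQeq]
  · -- surjectivity of Spec map
    intro ⟨p, hp⟩
    haveI := hp
    obtain ⟨q, hqp, hqc⟩ := aux_lyingOver g hgi hginj p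
    exact ⟨⟨q, hqp⟩, PrimeSpectrum.ext hqc⟩
  · -- residue fields
    intro q hq
    haveI := hq
    haveI : (q.comap g).IsPrime := Ideal.IsPrime.comap g
    set p := q.comap g with hp
    set Ap := Localization.AtPrime p
    set Cp := Localization (p.primeCompl.map g)
    set Cq := Localization.AtPrime q
    set kA : Ap →+* Cp :=
      IsLocalization.map Cp g (Submonoid.le_comap_map p.primeCompl) with hkA
    have hkAint : kA.IsIntegral := aux_kA_integral f C g hg hfi p
    have hle₂ : p.primeCompl.map g ≤ q.primeCompl.comap (RingHom.id C) := by
      rintro _ ⟨u, hu, rfl⟩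
      exact hu
    set ℓ : Cp →+* Cq := IsLocalization.map Cq (RingHom.id C) hle₂ with hℓ
    set lRH := Localization.localRingHom (q.comap g) q g rfl with hlRH
    have hlcomp : ℓ.comp kA = lRH := by
      apply IsLocalization.ringHom_ext p.primeCompl
      ext a
      simp only [RingHom.coe_comp, Function.comp_apply, hℓ, hkA, hlRH]
      rw [IsLocalization.map_eq, IsLocalization.map_eq, Localization.localRingHom_to_map]
      rfl
    set P : Ideal Cp := (IsLocalRing.maximalIdeal Cq).comap ℓ with hP
    haveI hPprime : P.IsPrime := by
      haveI : (IsLocalRing.maximalIdeal Cq).IsPrime :=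
        (IsLocalRing.maximalIdeal.isMaximal Cq).isPrime
      exact Ideal.IsPrime.comap ℓ
    have hPkA : P.comap kA = IsLocalRing.maximalIdeal Ap := by
      rw [hP, Ideal.comap_comap, hlcomp]
      ext z
      simp only [Ideal.mem_comap, IsLocalRing.mem_maximalIdeal, mem_nonunits_iff]
      constructor
      · intro h1 hz
        exact h1 (hz.map lRH)
      · intro h1 hz
        exact h1 (IsUnit.of_map lRH z hz)
    have hPmax : P.IsMaximal := by
      refine Ideal.isMaximal_of_isIntegral_of_isMaximal_comap' kA hkAint P ?_
      rw [hPkA]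
      exact IsLocalRing.maximalIdeal.isMaximal _
    set h := IsLocalRing.ResidueField.map lRH with hh
    have hrange : ∀ c : C,
        IsLocalRing.residue Cq (algebraMap C Cq c) ∈ h.fieldRange := by
      intro c
      obtain ⟨a, ha⟩ := aux_decomp f C g hf hfi hC hg p (algebraMap C Cp c)
      rw [Ideal.jacobson, Ideal.mem_sInf] at ha
      have hmem : algebraMap C Cp c - kA a ∈ P := ha ⟨bot_le, hPmax⟩
      have hl1 : ℓ (algebraMap C Cp c) = algebraMap C Cq c := by
        rw [hℓ, IsLocalization.map_eq]
        rfl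
      have hl2 : ℓ (kA a) = lRH a := DFunLike.congr_fun hlcomp a
      have key : algebraMap C Cq c = lRH a + ℓ (algebraMap C Cp c - kA a) := by
        rw [RingHom.map_sub, hl1, hl2]
        ring
      have hres := congrArg (IsLocalRing.residue Cq) key
      rw [map_add] at hres
      have h0 : IsLocalRing.residue Cq (ℓ (algebraMap C Cp c - kA a)) = 0 :=
        Ideal.Quotient.eq_zero_iff_mem.mpr hmem
      rw [h0, add_zero, ← IsLocalRing.ResidueField.map_residue lRH a] at hres
      exact ⟨IsLocalRing.residue Ap a, hres.symm⟩
    constructor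
    · exact h.injective
    · intro y
      obtain ⟨x, rfl⟩ := IsLocalRing.residue_surjective y
      obtain ⟨⟨c, s⟩, rfl⟩ := IsLocalization.mk'_surjective q.primeCompl x
      have hspec := IsLocalization.mk'_spec Cq c s
      have hmul := congrArg (IsLocalRing.residue Cq) hspec
      rw [map_mul] at hmul
      have hunit : IsUnit (algebraMap C Cq (s : C)) := IsLocalization.map_units Cq s
      have hne : IsLocalRing.residue Cq (algebraMap C Cq (s : C)) ≠ 0 :=
        (hunit.map (IsLocalRing.residue Cq)).ne_zero
      have hdiv : IsLocalRing.residue Cq (IsLocalization.mk' Cq c s)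
          = IsLocalRing.residue Cq (algebraMap C Cq c)
            / IsLocalRing.residue Cq (algebraMap C Cq (s : C)) :=
        (eq_div_iff hne).mpr hmul
      have hmem : IsLocalRing.residue Cq (IsLocalization.mk' Cq c s) ∈ h.fieldRange := by
        rw [hdiv]
        exact Subfield.div_mem _ (hrange c) (hrange (s : C))
      exact RingHom.mem_fieldRange.mp hmem
end

section
/- Let A ⊆ C ⊆ B be integral extensions of commutative rings. Then the extension A ⊆ C is subintegral if and only if C is contained in the seminormalization A⁺_B of A in B. (Universal property of the seminormalization.) -/
open IsLocalRing

section Aux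

variable {A C B : Type*} [CommRing A] [CommRing C] [CommRing B]

/-- The canonical map `A_p →+* B_p` for `f' : A →+* B`. -/
noncomputable def auxPhi (f' : A →+* B) (p : Ideal A) [p.IsPrime] :
    Localization.AtPrime p →+* Localization (p.primeCompl.map f') :=
  IsLocalization.map _ f' (Submonoid.le_comap_map p.primeCompl)

theorem auxPhi_algebraMap (f' : A →+* B) (p : Ideal A) [p.IsPrime] (x : A) :
    auxPhi f' p (algebraMap A (Localization.AtPrime p) x)
      = algebraMap B (Localization (p.primeCompl.map f')) (f' x) :=
  IsLocalization.map_eq _ _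

theorem auxPhi_comp (f' : A →+* B) (p : Ideal A) [p.IsPrime] :
    (auxPhi f' p).comp (algebraMap A (Localization.AtPrime p))
      = (algebraMap B (Localization (p.primeCompl.map f'))).comp f' :=
  IsLocalization.map_comp _

theorem auxPhi_isIntegral (f' : A →+* B) (hf' : f'.IsIntegral) (p : Ideal A) [p.IsPrime] :
    (auxPhi f' p).IsIntegral :=
  isIntegral_localization' hf' p.primeCompl

theorem aux_prime_eq_maximalIdeal {p : Ideal A} [p.IsPrime]
    {J : Ideal (Localization.AtPrime p)} (hJ : J.IsPrime)
    (h : J.comap (algebraMap A (Localization.AtPrime p)) = p) :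
    J = maximalIdeal (Localization.AtPrime p) := by
  refine le_antisymm (le_maximalIdeal hJ.ne_top) ?_
  rw [← Localization.AtPrime.map_eq_maximalIdeal]
  exact le_trans (Ideal.map_mono h.symm.le) Ideal.map_comap_le

end Aux

section Aux2

variable {A C B : Type*} [CommRing A] [CommRing C] [CommRing B]

theorem aux_comap_max_s3 (f' : A →+* B) (hf' : f'.IsIntegral) (p : Ideal A) [p.IsPrime]
    (M : Ideal (Localization (p.primeCompl.map f'))) (hM : M.IsMaximal) :
    M.comap (auxPhi f' p) = maximalIdeal (Localization.AtPrime p) := by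
  haveI := hM
  exact IsLocalRing.eq_maximalIdeal
    (Ideal.isMaximal_comap_of_isIntegral_of_isMaximal' _ (auxPhi_isIntegral f' hf' p) M)

theorem aux_comap_max_to_A (f' : A →+* B) (hf' : f'.IsIntegral) (p : Ideal A) [p.IsPrime]
    (M : Ideal (Localization (p.primeCompl.map f'))) (hM : M.IsMaximal) :
    (M.comap (algebraMap B (Localization (p.primeCompl.map f')))).comap f' = p := by
  have h1 : (M.comap (auxPhi f' p)).comap (algebraMap A (Localization.AtPrime p)) = p := by
    rw [aux_comap_max_s3 f' hf' p M hM]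
    exact Localization.AtPrime.comap_maximalIdeal
  rw [Ideal.comap_comap, auxPhi_comp, ← Ideal.comap_comap] at h1
  exact h1

theorem aux_exists_max (f : A →+* C) (g : C →+* B) (hg : Function.Injective g)
    (hgi : g.IsIntegral) (hfi' : (g.comp f).IsIntegral)
    (p : Ideal A) [p.IsPrime] (q : Ideal C) [q.IsPrime] (hq : q.comap f = p) :
    ∃ M : Ideal (Localization (p.primeCompl.map (g.comp f))),
      M.IsMaximal ∧
        (M.comap (algebraMap B (Localization (p.primeCompl.map (g.comp f))))).comap g = q := by
  letI := g.toAlgebra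
  haveI : Algebra.IsIntegral C B := ⟨hgi⟩
  have hinj : Function.Injective (algebraMap C B) := hg
  have hb : (⊥ : Ideal B).comap (algebraMap C B) ≤ q := by
    intro x hx
    rw [Ideal.mem_comap, Ideal.mem_bot] at hx
    rw [show x = 0 from hinj (by rw [hx, map_zero])]
    exact q.zero_mem
  obtain ⟨Q, -, hQprime, hQc⟩ := Ideal.exists_ideal_over_prime_of_isIntegral q ⊥ hb
  haveI := hQprime
  have hQg : Q.comap g = q := by rwa [RingHom.algebraMap_toAlgebra] at hQc
  have hdisj : Disjoint ((p.primeCompl.map (g.comp f) : Submonoid B) : Set B) (Q : Set B) := by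
    rw [Set.disjoint_left]
    rintro x hx hxQ
    obtain ⟨s, hs, rfl⟩ := Submonoid.mem_map.mp hx
    have : s ∈ q.comap f := by
      rw [← hQg]
      exact hxQ
    rw [hq] at this
    exact hs this
  refine ⟨Q.map (algebraMap B (Localization (p.primeCompl.map (g.comp f)))), ?_, ?_⟩
  · haveI hMp : (Q.map (algebraMap B (Localization (p.primeCompl.map (g.comp f))))).IsPrime :=
      IsLocalization.isPrime_of_isPrime_disjoint _ _ Q hQprime hdisj
    have hcom := IsLocalization.comap_map_of_isPrime_disjoint
      (p.primeCompl.map (g.comp f)) (Localization (p.primeCompl.map (g.comp f))) hQprime hdisj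
    refine Ideal.isMaximal_of_isIntegral_of_isMaximal_comap' (auxPhi (g.comp f) p)
      (auxPhi_isIntegral (g.comp f) hfi' p) _ ?_
    have heq : (Q.map (algebraMap B _)).comap (auxPhi (g.comp f) p) =
        maximalIdeal (Localization.AtPrime p) := by
      refine aux_prime_eq_maximalIdeal (Ideal.comap_isPrime _ _) ?_
      rw [Ideal.comap_comap, auxPhi_comp, ← Ideal.comap_comap, ← Ideal.under_def, hcom, ← Ideal.comap_comap, hQg, hq]
    rw [heq]
    exact IsLocalRing.maximalIdeal.isMaximal _
  · rw [← Ideal.under_def, IsLocalization.comap_map_of_isPrime_disjoint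
      (p.primeCompl.map (g.comp f)) (Localization (p.primeCompl.map (g.comp f))) hQprime hdisj,
      hQg]

end Aux2

section Aux3

variable {A C B : Type*} [CommRing A] [CommRing C] [CommRing B]

theorem aux_key (f : A →+* C) (g : C →+* B) (hg : Function.Injective g)
    (hgi : g.IsIntegral) (hfi' : (g.comp f).IsIntegral)
    (H : ∀ c : C, g c ∈ seminormalizationSet (g.comp f))
    (p : Ideal A) [p.IsPrime] (c : C) :
    ∃ a0 s0 : A, s0 ∉ p ∧
      ∀ (q : Ideal C), q.IsPrime → q.comap f = p → c * f s0 - f a0 ∈ q := by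
  obtain ⟨a, r, hr, heq⟩ := H c p
  have heq' : algebraMap B (Localization (p.primeCompl.map (g.comp f))) (g c)
      = auxPhi (g.comp f) p a + r := heq
  obtain ⟨⟨a0, s0⟩, rfl⟩ := IsLocalization.mk'_surjective p.primeCompl a
  refine ⟨a0, (s0 : A), s0.2, ?_⟩
  have key : algebraMap B (Localization (p.primeCompl.map (g.comp f)))
      (g (c * f (s0 : A) - f a0)) ∈ (⊥ : Ideal _).jacobson := by
    have h3 : g (c * f (s0 : A) - f a0) = g c * (g.comp f) (s0 : A) - (g.comp f) a0 := by
      simp [map_sub, map_mul]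
    rw [h3, map_sub, map_mul, heq', ← auxPhi_algebraMap, ← auxPhi_algebraMap]
    have h4 : (auxPhi (g.comp f) p (IsLocalization.mk' _ a0 s0) + r) *
          auxPhi (g.comp f) p (algebraMap A (Localization.AtPrime p) (s0 : A)) -
          auxPhi (g.comp f) p (algebraMap A (Localization.AtPrime p) a0)
        = r * auxPhi (g.comp f) p (algebraMap A (Localization.AtPrime p) (s0 : A)) := by
      rw [add_mul, ← map_mul, IsLocalization.mk'_spec]
      ring
    rw [h4]
    exact Ideal.mul_mem_right _ _ hr
  intro q hq hqp
  haveI := hq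
  obtain ⟨M, hM, hMq⟩ := aux_exists_max f g hg hgi hfi' p q hqp
  have hle : (⊥ : Ideal (Localization (p.primeCompl.map (g.comp f)))).jacobson ≤ M := by
    rw [Ideal.jacobson]
    exact sInf_le ⟨bot_le, hM⟩
  have := hle key
  rw [← hMq]
  exact this

end Aux3

section Aux4

variable {A C B : Type*} [CommRing A] [CommRing C] [CommRing B]

theorem aux_spec_inj (f : A →+* C) (g : C →+* B) (hg : Function.Injective g)
    (hgi : g.IsIntegral) (hfi' : (g.comp f).IsIntegral)
    (H : ∀ c : C, g c ∈ seminormalizationSet (g.comp f)) :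
    Function.Injective (PrimeSpectrum.comap f) := by
  have main : ∀ (q1 q2 : Ideal C), q1.IsPrime → q2.IsPrime →
      q1.comap f = q2.comap f → q1 ≤ q2 := by
    intro q1 q2 h1 h2 e c hc
    haveI := h1; haveI := h2
    haveI : (q1.comap f).IsPrime := Ideal.comap_isPrime f q1
    obtain ⟨a0, s0, hs0, hmem⟩ := aux_key f g hg hgi hfi' H (q1.comap f) c
    have m1 := hmem q1 h1 rfl
    have m2 := hmem q2 h2 e.symm
    have hfa1 : f a0 ∈ q1 := by
      have := q1.sub_mem (q1.mul_mem_right (f s0) hc) m1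
      simpa using this
    have hfa2 : f a0 ∈ q2 := by
      have : a0 ∈ q1.comap f := hfa1
      rw [e] at this
      exact this
    have hcs : c * f s0 ∈ q2 := by
      have := q2.add_mem m2 hfa2
      simpa using this
    rcases h2.mem_or_mem hcs with h | h
    · exact h
    · exact absurd (show s0 ∈ q1.comap f by rw [e]; exact h) hs0
  intro x y hxy
  have e : x.asIdeal.comap f = y.asIdeal.comap f := by
    have := congrArg PrimeSpectrum.asIdeal hxy
    rwa [PrimeSpectrum.comap_asIdeal, PrimeSpectrum.comap_asIdeal] at this
  exact PrimeSpectrum.ext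
    (le_antisymm (main _ _ x.isPrime y.isPrime e) (main _ _ y.isPrime x.isPrime e.symm))

theorem aux_spec_surj (f : A →+* C) (hf : Function.Injective f) (hfi : f.IsIntegral) :
    Function.Surjective (PrimeSpectrum.comap f) := by
  letI := f.toAlgebra
  haveI : Algebra.IsIntegral A C := ⟨hfi⟩
  have hinj : Function.Injective (algebraMap A C) := hf
  rintro ⟨p, hp⟩
  haveI := hp
  have hb : (⊥ : Ideal C).comap (algebraMap A C) ≤ p := by
    intro x hx
    rw [Ideal.mem_comap, Ideal.mem_bot] at hx
    rw [show x = 0 from hinj (by rw [hx, map_zero])]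
    exact p.zero_mem
  obtain ⟨Q, -, hQprime, hQc⟩ := Ideal.exists_ideal_over_prime_of_isIntegral p ⊥ hb
  haveI := hQprime
  refine ⟨⟨Q, hQprime⟩, PrimeSpectrum.ext ?_⟩
  rw [PrimeSpectrum.comap_asIdeal]
  rwa [RingHom.algebraMap_toAlgebra] at hQc

theorem aux_residue_surj (f : A →+* C) (g : C →+* B) (hg : Function.Injective g)
    (hgi : g.IsIntegral) (hfi' : (g.comp f).IsIntegral)
    (H : ∀ c : C, g c ∈ seminormalizationSet (g.comp f))
    (q : Ideal C) [hq : q.IsPrime] :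
    Function.Surjective
      (IsLocalRing.ResidueField.map (Localization.localRingHom (q.comap f) q f rfl)) := by
  haveI : (q.comap f).IsPrime := Ideal.comap_isPrime f q
  have claim : ∀ c : C, ∃ z,
      IsLocalRing.ResidueField.map (Localization.localRingHom (q.comap f) q f rfl) z
        = IsLocalRing.residue (Localization.AtPrime q)
            (algebraMap C (Localization.AtPrime q) c) := by
    intro c
    obtain ⟨a0, s0, hs0, hmem⟩ := aux_key f g hg hgi hfi' H (q.comap f) c
    have hcq : c * f s0 - f a0 ∈ q := hmem q hq rfl
    have hfs0 : f s0 ∈ q.primeCompl := fun h => hs0 h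
    refine ⟨IsLocalRing.residue _ (IsLocalization.mk' (Localization.AtPrime (q.comap f)) a0
      (⟨s0, hs0⟩ : (q.comap f).primeCompl)), ?_⟩
    rw [IsLocalRing.ResidueField.map_residue, Localization.localRingHom_mk']
    have hsub : IsLocalization.mk' (Localization.AtPrime q) (f a0)
          (⟨f s0, hfs0⟩ : q.primeCompl)
        - algebraMap C (Localization.AtPrime q) c ∈ maximalIdeal (Localization.AtPrime q) := by
      have hunit : IsUnit (algebraMap C (Localization.AtPrime q) (f s0)) :=
        IsLocalization.map_units _ (⟨f s0, hfs0⟩ : q.primeCompl)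
      have hmul : (IsLocalization.mk' (Localization.AtPrime q) (f a0)
            (⟨f s0, hfs0⟩ : q.primeCompl)
          - algebraMap C (Localization.AtPrime q) c)
          * algebraMap C (Localization.AtPrime q) (f s0)
          ∈ maximalIdeal (Localization.AtPrime q) := by
        have : (IsLocalization.mk' (Localization.AtPrime q) (f a0)
              (⟨f s0, hfs0⟩ : q.primeCompl)
            - algebraMap C (Localization.AtPrime q) c)
            * algebraMap C (Localization.AtPrime q) (f s0)
            = algebraMap C (Localization.AtPrime q) (-(c * f s0 - f a0)) := by
          rw [sub_mul, IsLocalization.mk'_spec]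
          rw [map_neg, map_sub, map_mul, neg_sub]
        rw [this]
        exact (IsLocalization.AtPrime.to_map_mem_maximal_iff _ q _).mpr (q.neg_mem hcq)
      rcases (IsLocalRing.maximalIdeal.isMaximal _).isPrime.mem_or_mem hmul with h | h
      · exact h
      · exact absurd hunit ((IsLocalRing.mem_maximalIdeal _).mp h)
    exact (Ideal.Quotient.mk_eq_mk_iff_sub_mem _ _).mpr hsub
  intro x
  obtain ⟨y, rfl⟩ := IsLocalRing.residue_surjective x
  obtain ⟨⟨c, s⟩, rfl⟩ := IsLocalization.mk'_surjective q.primeCompl y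
  obtain ⟨zc, hzc⟩ := claim c
  obtain ⟨zs, hzs⟩ := claim (s : C)
  refine ⟨zc * zs⁻¹, ?_⟩
  rw [map_mul, map_inv₀, hzc, hzs]
  have hunit : IsUnit (IsLocalRing.residue (Localization.AtPrime q)
      (algebraMap C (Localization.AtPrime q) (s : C))) :=
    (IsLocalization.map_units (Localization.AtPrime q) s).map (IsLocalRing.residue _)
  have hne : IsLocalRing.residue (Localization.AtPrime q)
      (algebraMap C (Localization.AtPrime q) (s : C)) ≠ 0 := hunit.ne_zero
  field_simp
  rw [← map_mul, IsLocalization.mk'_spec']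

end Aux4

section Aux5

variable {A C B : Type*} [CommRing A] [CommRing C] [CommRing B]

theorem aux_forward (f : A →+* C) (g : C →+* B)
    (hfi' : (g.comp f).IsIntegral)
    (hs : f.IsSubintegral) (c : C) : g c ∈ seminormalizationSet (g.comp f) := by
  intro p hp
  obtain ⟨x, hx⟩ := hs.2.1.2 ⟨p, hp⟩
  obtain ⟨q, hq⟩ := x
  have hqp : q.comap f = p := by
    have := congrArg PrimeSpectrum.asIdeal hx
    rwa [PrimeSpectrum.comap_asIdeal] at this
  subst hqp
  haveI := hq
  haveI : (q.comap f).IsPrime := hp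
  obtain ⟨z, hz⟩ := (hs.2.2 q).2 (IsLocalRing.residue _ (algebraMap C (Localization.AtPrime q) c))
  obtain ⟨u, rfl⟩ := IsLocalRing.residue_surjective z
  obtain ⟨⟨a0, s0⟩, rfl⟩ := IsLocalization.mk'_surjective (q.comap f).primeCompl u
  rw [IsLocalRing.ResidueField.map_residue, Localization.localRingHom_mk'] at hz
  have hsub := (Ideal.Quotient.mk_eq_mk_iff_sub_mem _ _).mp hz
  have hfs0 : f (s0 : A) ∈ q.primeCompl := fun h => s0.2 h
  -- derive `c * f s0 - f a0 ∈ q`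
  have hcq : c * f (s0 : A) - f a0 ∈ q := by
    have hmul : (IsLocalization.mk' (Localization.AtPrime q) (f a0)
          (⟨f (s0 : A), hfs0⟩ : q.primeCompl)
        - algebraMap C (Localization.AtPrime q) c)
        * algebraMap C (Localization.AtPrime q) (f (s0 : A))
        ∈ maximalIdeal (Localization.AtPrime q) :=
      Ideal.mul_mem_right _ _ hsub
    have heq2 : (IsLocalization.mk' (Localization.AtPrime q) (f a0)
          (⟨f (s0 : A), hfs0⟩ : q.primeCompl)
        - algebraMap C (Localization.AtPrime q) c)
        * algebraMap C (Localization.AtPrime q) (f (s0 : A))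
        = algebraMap C (Localization.AtPrime q) (-(c * f (s0 : A) - f a0)) := by
      rw [sub_mul, IsLocalization.mk'_spec]
      rw [map_neg, map_sub, map_mul, neg_sub]
    rw [heq2] at hmul
    have := (IsLocalization.AtPrime.to_map_mem_maximal_iff _ q _).mp hmul
    simpa using q.neg_mem this
  refine ⟨IsLocalization.mk' (Localization.AtPrime (q.comap f)) a0 s0,
    algebraMap B (Localization ((q.comap f).primeCompl.map (g.comp f))) (g c)
      - auxPhi (g.comp f) (q.comap f)
          (IsLocalization.mk' (Localization.AtPrime (q.comap f)) a0 s0), ?_, ?_⟩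
  · rw [Ideal.jacobson, Ideal.mem_sInf]
    rintro M ⟨-, hM⟩
    have hA := aux_comap_max_to_A (g.comp f) hfi' (q.comap f) M hM
    haveI := hM.isPrime
    have hqM : (M.comap (algebraMap B (Localization ((q.comap f).primeCompl.map (g.comp f))))).comap g
        = q := by
      have e : (((M.comap (algebraMap B (Localization ((q.comap f).primeCompl.map
          (g.comp f))))).comap g).comap f) = q.comap f := by
        rw [Ideal.comap_comap]; exact hA
      have := hs.2.1.1 (a₁ := ⟨(M.comap (algebraMap B (Localization ((q.comap f).primeCompl.map
          (g.comp f))))).comap g, inferInstance⟩) (a₂ := ⟨q, hq⟩)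
        (PrimeSpectrum.ext (by rw [PrimeSpectrum.comap_asIdeal, PrimeSpectrum.comap_asIdeal]; exact e))
      exact congrArg PrimeSpectrum.asIdeal this
    have hmm : algebraMap B (Localization ((q.comap f).primeCompl.map (g.comp f)))
        (g (c * f (s0 : A) - f a0)) ∈ M := by
      have h5 : c * f (s0 : A) - f a0
          ∈ (M.comap (algebraMap B (Localization ((q.comap f).primeCompl.map
              (g.comp f))))).comap g := by rw [hqM]; exact hcq
      rw [Ideal.mem_comap, Ideal.mem_comap] at h5
      exact h5
    have hunit : IsUnit (algebraMap B (Localization ((q.comap f).primeCompl.map (g.comp f)))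
        ((g.comp f) (s0 : A))) :=
      IsLocalization.map_units _ (⟨(g.comp f) (s0 : A), Submonoid.mem_map_of_mem _ s0.2⟩ :
        ((q.comap f).primeCompl.map (g.comp f)))
    have hr : (algebraMap B (Localization ((q.comap f).primeCompl.map (g.comp f))) (g c)
          - auxPhi (g.comp f) (q.comap f) (IsLocalization.mk' (Localization.AtPrime (q.comap f)) a0 s0))
        * algebraMap B (Localization ((q.comap f).primeCompl.map (g.comp f))) ((g.comp f) (s0 : A))
        = algebraMap B (Localization ((q.comap f).primeCompl.map (g.comp f)))
            (g (c * f (s0 : A) - f a0)) := by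
      rw [sub_mul, ← auxPhi_algebraMap, ← map_mul, IsLocalization.mk'_spec]
      simp [auxPhi_algebraMap, map_sub, map_mul, RingHom.comp_apply]
    rw [← hr] at hmm
    rcases hM.isPrime.mem_or_mem hmm with h | h
    · exact h
    · exact absurd (M.eq_top_of_isUnit_mem h hunit) hM.isPrime.ne_top
  · show _ = auxPhi (g.comp f) (q.comap f) (IsLocalization.mk' (Localization.AtPrime (q.comap f)) a0 s0)
      + (algebraMap B (Localization ((q.comap f).primeCompl.map (g.comp f))) (g c)
        - auxPhi (g.comp f) (q.comap f) (IsLocalization.mk' (Localization.AtPrime (q.comap f)) a0 s0))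
    ring

end Aux5

/-- **Universal property of the seminormalization.** Let `A ⊆ C ⊆ B` be integral extensions
of commutative rings. Then `A ⊆ C` is subintegral if and only if (the image of) `C` is
contained in the seminormalization `A⁺_B` of `A` in `B`. -/
theorem subintegral_iff_le_seminormalization {A C B : Type*}
    [CommRing A] [CommRing C] [CommRing B]
    (f : A →+* C) (g : C →+* B)
    (hf : Function.Injective f) (hg : Function.Injective g)
    (hfi : f.IsIntegral) (hgi : g.IsIntegral) :
    f.IsSubintegral ↔ ∀ c : C, g c ∈ seminormalizationSet (g.comp f) := by
  have hfi' : (g.comp f).IsIntegral := RingHom.IsIntegral.trans f g hfi hgi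
  constructor
  · intro hs c
    exact aux_forward f g hfi' hs c
  · intro H
    refine ⟨hfi, ⟨aux_spec_inj f g hg hgi hfi' H, aux_spec_surj f hf hfi⟩, ?_⟩
    intro q hq
    exact ⟨RingHom.injective _, aux_residue_surj f g hg hgi hfi' H q⟩
end

section
/- Let k be an algebraically closed field of characteristic zero and let A ⊆ B be an extension of finitely generated reduced k-algebras making B a finite A-module. Then A⁺ᵐᵃˣ_B = A⁺_B, where A⁺ᵐᵃˣ_B = { b ∈ B : for every maximal ideal m of A, the image of b in B_m lies in A_m + Rad(B_m) } and A⁺_B = { b ∈ B : for every prime ideal p of A, the image of b in B_p lies in A_p + Rad(B_p) }. -/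
/-- The variant of the seminormalization of `A` in `B` where one only glues over the
maximal ideals: the set of `b ∈ B` such that for every *maximal* ideal `m` of `A`, the image
of `b` in `B_m` lies in `A_m + Rad(B_m)`. -/
def seminormalizationMaxSet {A B : Type*} [CommRing A] [CommRing B] (f : A →+* B) : Set B :=
  { b | ∀ (m : Ideal A) [m.IsMaximal],
      ∃ (a : Localization.AtPrime m) (r : Localization (m.primeCompl.map f)),
        r ∈ (⊥ : Ideal (Localization (m.primeCompl.map f))).jacobson ∧
        algebraMap B (Localization (m.primeCompl.map f)) b =
          IsLocalization.map (Localization (m.primeCompl.map f)) f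
            (Submonoid.le_comap_map m.primeCompl) a + r }


/-- Zariski / Nullstellensatz: a finitely generated algebra over an algebraically closed
field which is a field is isomorphic to the base field. -/
lemma aux_bijective_algebraMap {k Q : Type*} [Field k] [IsAlgClosed k] [Field Q]
    [Algebra k Q] [Algebra.FiniteType k Q] : Function.Bijective (algebraMap k Q) := by
  have h1 : Module.Finite k Q := finite_of_finite_type_of_isJacobsonRing k Q
  have h2 : Algebra.IsIntegral k Q := Algebra.IsIntegral.of_finite k Q
  exact ⟨(algebraMap k Q).injective, IsAlgClosed.algebraMap_bijective_of_isIntegral.2⟩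

/-- Existence of a `k`-point avoiding a nonzero element, for a f.g. domain over an
algebraically closed field. -/
lemma aux_exists_point {k R : Type*} [Field k] [IsAlgClosed k] [CommRing R] [IsDomain R]
    [Algebra k R] [Algebra.FiniteType k R] {u : R} (hu : u ≠ 0) :
    ∃ φ : R →ₐ[k] k, φ u ≠ 0 := by
  have hle : Submonoid.powers u ≤ nonZeroDivisors R :=
    powers_le_nonZeroDivisors_of_noZeroDivisors hu
  let R' := Localization.Away u
  haveI : Algebra.FiniteType R R' :=
    IsLocalization.finiteType_of_monoid_fg (Submonoid.powers u) R'
  haveI : Algebra.FiniteType k R' := Algebra.FiniteType.trans ‹Algebra.FiniteType k R› ‹_›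
  haveI : IsDomain R' := IsLocalization.isDomain_localization hle
  obtain ⟨M, hM⟩ := Ideal.exists_maximal R'
  letI : Field (R' ⧸ M) := Ideal.Quotient.field M
  haveI : Algebra.FiniteType k (R' ⧸ M) :=
    Algebra.FiniteType.of_surjective (Ideal.Quotient.mkₐ k M) (Ideal.Quotient.mkₐ_surjective k M)
  have hbij := aux_bijective_algebraMap (k := k) (Q := R' ⧸ M)
  let e : k ≃ₐ[k] (R' ⧸ M) := AlgEquiv.ofBijective (Algebra.ofId k _) hbij
  refine ⟨(e.symm.toAlgHom.comp (Ideal.Quotient.mkₐ k M)).comp (IsScalarTower.toAlgHom k R R'), ?_⟩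
  simp only [AlgHom.comp_apply]
  intro h0
  have h1 : Ideal.Quotient.mk M (algebraMap R R' u) = 0 := by
    have := congrArg e h0
    simpa using this
  have h2 : IsUnit (algebraMap R R' u) :=
    IsLocalization.map_units R' (⟨u, Submonoid.mem_powers u⟩ : Submonoid.powers u)
  rw [Ideal.Quotient.eq_zero_iff_mem] at h1
  exact hM.ne_top (Ideal.eq_top_of_isUnit_mem M h1 h2)

/-- Extension of a `k`-point along an integral extension of domains (with `k` alg. closed). -/
lemma aux_extend_point {k R S : Type*} [Field k] [IsAlgClosed k] [CommRing R] [CommRing S]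
    [Nontrivial S] [Algebra k R] [Algebra k S] [Algebra.FiniteType k S]
    [Algebra R S] [IsScalarTower k R S] [Algebra.IsIntegral R S]
    (hinj : Function.Injective (algebraMap R S))
    (φ : R →ₐ[k] k) : ∃ Φ : S →ₐ[k] k, ∀ r : R, Φ (algebraMap R S r) = φ r := by
  have hφs : Function.Surjective φ := fun c => ⟨algebraMap k R c, φ.commutes c⟩
  have hm : (RingHom.ker φ.toRingHom).IsMaximal :=
    RingHom.ker_isMaximal_of_surjective φ.toRingHom hφs
  have hker : RingHom.ker (algebraMap R S) ≤ RingHom.ker φ.toRingHom := by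
    rw [(RingHom.injective_iff_ker_eq_bot _).mp hinj]; exact bot_le
  obtain ⟨n, hn, hcomap⟩ :=
    Ideal.exists_ideal_over_maximal_of_isIntegral (RingHom.ker φ.toRingHom) hker
  letI : Field (S ⧸ n) := Ideal.Quotient.field n
  haveI : Algebra.FiniteType k (S ⧸ n) :=
    Algebra.FiniteType.of_surjective (Ideal.Quotient.mkₐ k n) (Ideal.Quotient.mkₐ_surjective k n)
  have hbij := aux_bijective_algebraMap (k := k) (Q := S ⧸ n)
  let e : k ≃ₐ[k] (S ⧸ n) := AlgEquiv.ofBijective (Algebra.ofId k _) hbij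
  refine ⟨e.symm.toAlgHom.comp (Ideal.Quotient.mkₐ k n), fun r => ?_⟩
  have key : Ideal.Quotient.mk n (algebraMap R S r) = algebraMap k (S ⧸ n) (φ r) := by
    have hmem : r - algebraMap k R (φ r) ∈ RingHom.ker φ.toRingHom := by
      simp [RingHom.mem_ker, map_sub, φ.commutes]
    have hmem2 : algebraMap R S (r - algebraMap k R (φ r)) ∈ n := by
      rw [← hcomap] at hmem; exact hmem
    have : Ideal.Quotient.mk n (algebraMap R S r - algebraMap R S (algebraMap k R (φ r))) = 0 := by
      rw [Ideal.Quotient.eq_zero_iff_mem]; rwa [map_sub] at hmem2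
    rw [map_sub, sub_eq_zero] at this
    rw [this, ← IsScalarTower.algebraMap_apply k R S, IsScalarTower.algebraMap_apply k S (S ⧸ n),
      Ideal.Quotient.algebraMap_eq]
  simp only [AlgHom.comp_apply, Ideal.Quotient.mkₐ_eq_mk, AlgEquiv.toAlgHom_eq_coe,
    AlgHom.coe_coe]
  rw [key]
  have : algebraMap k (S ⧸ n) (φ r) = e (φ r) := rfl
  rw [this]; exact e.symm_apply_apply (φ r)

set_option maxHeartbeats 1000000 in
set_option synthInstance.maxHeartbeats 400000 in
open IntermediateField in
/-- Core lemma. -/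
lemma aux_core {k R S K F : Type*} [Field k] [IsAlgClosed k] [CharZero k]
    [CommRing R] [CommRing S] [IsDomain R] [IsDomain S]
    [Algebra k R] [Algebra k S] [Algebra.FiniteType k S]
    [Algebra R S] [IsScalarTower k R S] [Algebra.IsIntegral R S]
    [Field K] [Algebra R K] [IsFractionRing R K]
    [Field F] [Algebra S F] [IsFractionRing S F]
    (hinj : Function.Injective (algebraMap R S)) (β : S)
    (H : ∀ Φ₁ Φ₂ : S →ₐ[k] k,
      (∀ r : R, Φ₁ (algebraMap R S r) = Φ₂ (algebraMap R S r)) → Φ₁ β = Φ₂ β) :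
    ∃ x y : R, y ≠ 0 ∧ algebraMap R S y * β = algebraMap R S x := by
  classical
  letI : Algebra R F := ((algebraMap S F).comp (algebraMap R S)).toAlgebra
  haveI : IsScalarTower R S F := IsScalarTower.of_algebraMap_eq fun _ => rfl
  have hRF : Function.Injective (algebraMap R F) := by
    rw [IsScalarTower.algebraMap_eq R S F]
    exact (IsFractionRing.injective S F).comp hinj
  haveI : Module.IsTorsionFree R F := Module.isTorsionFree_iff_algebraMap_injective.mpr hRF
  letI : Algebra K F := (IsFractionRing.lift (g := algebraMap R F) hRF).toAlgebra
  haveI : IsScalarTower R K F := IsScalarTower.of_algebraMap_eq fun x =>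
    (IsFractionRing.lift_algebraMap hRF x).symm
  -- algebraicity
  haveI : Algebra.IsAlgebraic R S := Algebra.IsIntegral.isAlgebraic
  haveI : Algebra.IsAlgebraic R F := (IsFractionRing.isAlgebraic_iff' R S F).mp ‹_›
  haveI : Algebra.IsAlgebraic K F :=
    (IsFractionRing.comap_isAlgebraic_iff (A := R) (K := K) (C := F)).mp ‹_›
  haveI : CharZero R := charZero_of_injective_algebraMap (algebraMap k R).injective
  haveI : CharZero K := charZero_of_injective_algebraMap (IsFractionRing.injective R K)
  set βF : F := algebraMap S F β with hβF
  have hβRint : IsIntegral R βF := (Algebra.IsIntegral.isIntegral β).map (IsScalarTower.toAlgHom R S F)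
  have hβK : IsIntegral K βF := hβRint.tower_top
  by_cases hmem : βF ∈ (algebraMap K F).range
  · obtain ⟨κ, hκ⟩ := hmem
    obtain ⟨⟨x, y⟩, hxy⟩ := IsLocalization.mk'_surjective (nonZeroDivisors R) κ
    have hspec := IsLocalization.mk'_spec K x y
    rw [show IsLocalization.mk' K x y = κ from hxy] at hspec
    have key : βF * algebraMap R F (y : R) = algebraMap R F x := by
      have h2 := congrArg (algebraMap K F) hspec
      rwa [map_mul, hκ, ← IsScalarTower.algebraMap_apply R K F,
        ← IsScalarTower.algebraMap_apply R K F] at h2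
    refine ⟨x, y, nonZeroDivisors.ne_zero y.2, IsFractionRing.injective S F ?_⟩
    rw [map_mul, ← IsScalarTower.algebraMap_apply R S F, ← IsScalarTower.algebraMap_apply R S F,
      mul_comm, ← hβF]
    exact key
  · exfalso
    set g : Polynomial K := minpoly K βF with hg
    have hirr : Irreducible g := minpoly.irreducible hβK
    have hsep : g.Separable := hirr.separable
    have hge2 : 2 ≤ g.natDegree := (minpoly.two_le_natDegree_iff hβK).mpr hmem
    set Kbar := AlgebraicClosure K with hKbar
    haveI : Module.IsTorsionFree K F :=
      Module.isTorsionFree_iff_algebraMap_injective.mpr (algebraMap K F).injective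
    haveI : Module.IsTorsionFree K Kbar :=
      Module.isTorsionFree_iff_algebraMap_injective.mpr (algebraMap K Kbar).injective
    let j : F →ₐ[K] Kbar := IsAlgClosed.lift
    have hjroot : (Polynomial.aeval (j βF)) g = 0 := by
      rw [Polynomial.aeval_algHom_apply, minpoly.aeval, map_zero]
    have hg0 : g ≠ 0 := minpoly.ne_zero hβK
    have hcard : Fintype.card (g.rootSet Kbar) = g.natDegree :=
      Polynomial.card_rootSet_eq_natDegree hsep (IsAlgClosed.splits _)
    have hjmem : j βF ∈ g.rootSet Kbar := by
      rw [Polynomial.mem_rootSet]; exact ⟨hg0, hjroot⟩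
    obtain ⟨xx, hxne'⟩ :=
      Fintype.exists_ne_of_one_lt_card (by rw [hcard]; omega) (⟨j βF, hjmem⟩ : g.rootSet Kbar)
    obtain ⟨x, hxmem⟩ := xx
    have hxne : x ≠ j βF := fun h => hxne' (Subtype.ext h)
    rw [Polynomial.mem_rootSet] at hxmem
    have hxroot : x ∈ g.aroots Kbar := (Polynomial.mem_aroots).mpr ⟨hg0, hxmem.2⟩
    let τ' : K⟮βF⟯ →ₐ[K] Kbar :=
      (IntermediateField.algHomAdjoinIntegralEquiv K (K := Kbar) hβK).symm ⟨x, hxroot⟩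
    have hτ'gen : τ' (IntermediateField.AdjoinSimple.gen K βF) = x :=
      IntermediateField.algHomAdjoinIntegralEquiv_symm_apply_gen K hβK ⟨x, hxroot⟩
    letI : Algebra K⟮βF⟯ Kbar := τ'.toRingHom.toAlgebra
    haveI : IsScalarTower K K⟮βF⟯ Kbar :=
      IsScalarTower.of_algebraMap_eq fun c => (τ'.commutes c).symm
    haveI : Algebra.IsAlgebraic K⟮βF⟯ F := Algebra.IsAlgebraic.tower_top (K := K) K⟮βF⟯
    haveI : Module.IsTorsionFree K⟮βF⟯ F :=
      Module.isTorsionFree_iff_algebraMap_injective.mpr (algebraMap K⟮βF⟯ F).injective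
    haveI : Module.IsTorsionFree K⟮βF⟯ Kbar :=
      Module.isTorsionFree_iff_algebraMap_injective.mpr τ'.toRingHom.injective
    let σ₂' : F →ₐ[K⟮βF⟯] Kbar := IsAlgClosed.lift
    let σ₂ : F →ₐ[K] Kbar := σ₂'.restrictScalars K
    have hσ₂β : σ₂ βF = x := by
      have h2 := σ₂'.commutes (IntermediateField.AdjoinSimple.gen K βF)
      rw [IntermediateField.AdjoinSimple.algebraMap_gen] at h2
      exact h2.trans hτ'gen
    -- `k`-algebra structure on Kbar
    letI : Algebra k Kbar :=
      ((algebraMap K Kbar).comp ((algebraMap R K).comp (algebraMap k R))).toAlgebra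
    have halg : ∀ (σ : F →ₐ[K] Kbar) (r : R),
        σ (algebraMap S F (algebraMap R S r)) = algebraMap K Kbar (algebraMap R K r) := by
      intro σ r
      rw [← IsScalarTower.algebraMap_apply R S F, IsScalarTower.algebraMap_apply R K F,
        σ.commutes]
    have hcomm : ∀ (σ : F →ₐ[K] Kbar) (c : k),
        σ.toRingHom.comp ((algebraMap S F).comp (algebraMap k S)) c = algebraMap k Kbar c := by
      intro σ c
      show σ (algebraMap S F (algebraMap k S c)) = _
      rw [IsScalarTower.algebraMap_apply k R S c, halg σ (algebraMap k R c)]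
      rfl
    let η : (F →ₐ[K] Kbar) → (S →ₐ[k] Kbar) := fun σ =>
      { toRingHom := σ.toRingHom.comp (algebraMap S F), commutes' := fun c => hcomm σ c }
    have hηapp : ∀ σ z, η σ z = σ (algebraMap S F z) := fun _ _ => rfl
    -- the finitely generated subalgebra
    obtain ⟨s, hs⟩ : ∃ s : Finset S, Algebra.adjoin k (↑s : Set S) = ⊤ :=
      ‹Algebra.FiniteType k S›.out
    let t : Finset Kbar := s.image (η j) ∪ s.image (η σ₂)
    let G : Subalgebra k Kbar := Algebra.adjoin k (↑t : Set Kbar)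
    haveI : Algebra.FiniteType k G := (Subalgebra.fg_iff_finiteType _).mp ⟨t, rfl⟩
    have hrange : ∀ (σ : F →ₐ[K] Kbar), (η σ) '' ↑s ⊆ ↑t → ∀ z : S, η σ z ∈ G := by
      intro σ hsub z
      have hz : z ∈ Algebra.adjoin k (↑s : Set S) := by rw [hs]; trivial
      have : η σ z ∈ (Algebra.adjoin k (↑s : Set S)).map (η σ) :=
        Subalgebra.mem_map.mpr ⟨z, hz, rfl⟩
      rw [AlgHom.map_adjoin] at this
      exact Algebra.adjoin_mono hsub this
    have hsub1 : (η j) '' ↑s ⊆ ↑t := by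
      intro w hw; obtain ⟨z, hz, rfl⟩ := hw
      simp only [t, Finset.coe_union, Finset.coe_image, Set.mem_union]
      exact Or.inl ⟨z, hz, rfl⟩
    have hsub2 : (η σ₂) '' ↑s ⊆ ↑t := by
      intro w hw; obtain ⟨z, hz, rfl⟩ := hw
      simp only [t, Finset.coe_union, Finset.coe_image, Set.mem_union]
      exact Or.inr ⟨z, hz, rfl⟩
    let Φ₁ : S →ₐ[k] G := (η j).codRestrict G (hrange j hsub1)
    let Φ₂ : S →ₐ[k] G := (η σ₂).codRestrict G (hrange σ₂ hsub2)
    have hγ : Φ₁ β - Φ₂ β ≠ 0 := by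
      intro h0
      rw [sub_eq_zero] at h0
      have : (Φ₁ β : Kbar) = (Φ₂ β : Kbar) := congrArg Subtype.val h0
      have h2 : j βF = σ₂ βF := this
      rw [hσ₂β] at h2
      exact hxne h2.symm
    obtain ⟨φ₀, hφ₀⟩ := aux_exists_point (k := k) hγ
    have hagree : ∀ r : R, (φ₀.comp Φ₁) (algebraMap R S r) = (φ₀.comp Φ₂) (algebraMap R S r) := by
      intro r
      have h1 : Φ₁ (algebraMap R S r) = Φ₂ (algebraMap R S r) := by
        apply Subtype.ext
        show η j (algebraMap R S r) = η σ₂ (algebraMap R S r)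
        rw [hηapp, hηapp, halg, halg]
      simp [AlgHom.comp_apply, h1]
    have := H (φ₀.comp Φ₁) (φ₀.comp Φ₂) hagree
    apply hφ₀
    rw [map_sub, sub_eq_zero]
    exact this

lemma aux_disjoint {A B : Type*} [CommRing A] [CommRing B] (f : A →+* B)
    (p : Ideal A) [p.IsPrime] (q : Ideal B) (hqc : q.comap f ≤ p) :
    Disjoint (↑(p.primeCompl.map f) : Set B) ↑q := by
  rw [Set.disjoint_left]
  rintro x hxT hxq
  obtain ⟨a, ha, rfl⟩ := Submonoid.mem_map.mp hxT
  exact ha (hqc hxq)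

set_option maxHeartbeats 800000 in
lemma aux_isMaximal_map {A B : Type*} [CommRing A] [CommRing B] (f : A →+* B)
    (hint : f.IsIntegral) (p : Ideal A) [p.IsPrime]
    (q : Ideal B) (hq : q.IsPrime) (hqc : q.comap f = p) :
    (q.map (algebraMap B (Localization (p.primeCompl.map f)))).IsMaximal := by
  set Bp := Localization (p.primeCompl.map f)
  set φ := algebraMap B Bp
  set floc : Localization.AtPrime p →+* Bp := IsLocalization.map Bp f (Submonoid.le_comap_map p.primeCompl) with hfloc
  have hdisj : Disjoint (↑(p.primeCompl.map f) : Set B) ↑q := aux_disjoint f p q hqc.le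
  haveI hprime : (q.map φ).IsPrime :=
    IsLocalization.isPrime_of_isPrime_disjoint (p.primeCompl.map f) Bp q hq hdisj
  have hne : (q.map φ).comap floc ≠ ⊤ := by
    intro h
    have h1 : (1 : Localization.AtPrime p) ∈ (q.map φ).comap floc := h ▸ Submodule.mem_top
    have h2 : (1 : Bp) ∈ q.map φ := by simpa using h1
    exact hprime.ne_top ((Ideal.eq_top_iff_one _).mpr h2)
  have hle2 : IsLocalRing.maximalIdeal (Localization.AtPrime p) ≤ (q.map φ).comap floc := by
    rw [← Localization.AtPrime.map_eq_maximalIdeal, Ideal.map_le_iff_le_comap,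
      Ideal.comap_comap, IsLocalization.map_comp]
    intro a ha
    have : f a ∈ q := by rw [← hqc] at ha; exact ha
    exact Ideal.mem_map_of_mem φ this
  have hcomap : (q.map φ).comap floc = IsLocalRing.maximalIdeal (Localization.AtPrime p) :=
    le_antisymm (IsLocalRing.le_maximalIdeal hne) hle2
  have hmaxc : ((q.map φ).comap floc).IsMaximal := by
    rw [hcomap]; exact IsLocalRing.maximalIdeal.isMaximal _
  exact Ideal.isMaximal_of_isIntegral_of_isMaximal_comap' floc
    (isIntegral_localization' hint p.primeCompl) (q.map φ) hmaxc

set_option maxHeartbeats 800000 in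
lemma aux_maximal_structure {A B : Type*} [CommRing A] [CommRing B] (f : A →+* B)
    (hint : f.IsIntegral) (p : Ideal A) [p.IsPrime]
    (M : Ideal (Localization (p.primeCompl.map f))) (hM : M.IsMaximal) :
    ∃ q : Ideal B, q.IsPrime ∧ q.comap f = p ∧
      M = q.map (algebraMap B (Localization (p.primeCompl.map f))) := by
  set Bp := Localization (p.primeCompl.map f)
  set φ := algebraMap B Bp
  haveI hMp : M.IsPrime := hM.isPrime
  set q := M.comap φ with hqdef
  obtain ⟨hqprime, hdisjq⟩ :=
    (IsLocalization.isPrime_iff_isPrime_disjoint (p.primeCompl.map f) Bp M).mp hMp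
  have hMq : M = q.map φ := (IsLocalization.map_comap (p.primeCompl.map f) Bp M).symm
  have hqle : q.comap f ≤ p := by
    intro a ha
    by_contra hap
    have hfa : f a ∈ p.primeCompl.map f := Submonoid.mem_map_of_mem _ hap
    exact Set.disjoint_left.mp hdisjq hfa ha
  letI : Algebra A B := f.toAlgebra
  haveI : Algebra.IsIntegral A B := Algebra.isIntegral_def.mpr hint
  obtain ⟨Q, hQge, hQprime, hQcomap⟩ := Ideal.exists_ideal_over_prime_of_isIntegral p q hqle
  have hQdisj : Disjoint (↑(p.primeCompl.map f) : Set B) ↑Q := aux_disjoint f p Q hQcomap.le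
  haveI hQmapprime : (Q.map φ).IsPrime :=
    IsLocalization.isPrime_of_isPrime_disjoint (p.primeCompl.map f) Bp Q hQprime hQdisj
  have hMQ : M = Q.map φ :=
    hM.eq_of_le hQmapprime.ne_top (hMq ▸ Ideal.map_mono hQge)
  exact ⟨Q, hQprime, hQcomap, hMQ⟩

set_option maxHeartbeats 800000 in
lemma aux_semi_char {A B : Type*} [CommRing A] [CommRing B] (f : A →+* B)
    (hint : f.IsIntegral) (p : Ideal A) [p.IsPrime] (b : B) :
    (∃ (a : Localization.AtPrime p) (r : Localization (p.primeCompl.map f)),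
        r ∈ (⊥ : Ideal (Localization (p.primeCompl.map f))).jacobson ∧
        algebraMap B (Localization (p.primeCompl.map f)) b =
          IsLocalization.map (Localization (p.primeCompl.map f)) f
            (Submonoid.le_comap_map p.primeCompl) a + r) ↔
      (∃ a s : A, s ∉ p ∧ ∀ q : Ideal B, q.IsPrime → q.comap f = p → f s * b - f a ∈ q) := by
  set Bp := Localization (p.primeCompl.map f)
  set φ := algebraMap B Bp with hφdef
  set floc : Localization.AtPrime p →+* Bp := IsLocalization.map Bp f (Submonoid.le_comap_map p.primeCompl) with hfloc
  have hkey : ∀ (x : A) (s : p.primeCompl),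
      floc (IsLocalization.mk' (Localization.AtPrime p) x s) * φ (f s) = φ (f x) := by
    intro x s
    rw [hfloc, IsLocalization.map_mk' (M := p.primeCompl) (T := p.primeCompl.map f)]
    exact IsLocalization.mk'_spec Bp (f x) ⟨f s, Submonoid.mem_map_of_mem _ s.2⟩
  constructor
  · rintro ⟨a, r, hr, heq⟩
    obtain ⟨⟨x, s⟩, hxs⟩ := IsLocalization.mk'_surjective p.primeCompl a
    refine ⟨x, s, s.2, fun q hq hqc => ?_⟩
    have hmax := aux_isMaximal_map f hint p q hq hqc
    have hrM : r ∈ q.map φ := by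
      have := Ideal.mem_sInf.mp hr (show q.map φ ∈ {J : Ideal Bp | ⊥ ≤ J ∧ J.IsMaximal} from
        ⟨bot_le, hmax⟩)
      exact this
    have hmem : φ (f s * b - f x) ∈ q.map φ := by
      have h2 : floc a * φ (f s) = φ (f x) := by rw [← hxs]; exact hkey x s
      have hc : φ (f s * b - f x) = φ (f s) * r := by
        calc φ (f s * b - f x) = φ (f s) * φ b - φ (f x) := by rw [map_sub, map_mul]
          _ = φ (f s) * (floc a + r) - φ (f x) := by rw [heq]
          _ = floc a * φ (f s) + φ (f s) * r - φ (f x) := by ring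
          _ = φ (f x) + φ (f s) * r - φ (f x) := by rw [h2]
          _ = φ (f s) * r := by ring
      rw [hc]
      exact Ideal.mul_mem_left _ _ hrM
    have hcomap := IsLocalization.comap_map_of_isPrime_disjoint (p.primeCompl.map f) Bp hq
      (aux_disjoint f p q hqc.le)
    rw [← hcomap]
    exact hmem
  · rintro ⟨a, s, hs, hq⟩
    refine ⟨IsLocalization.mk' (Localization.AtPrime p) a (⟨s, hs⟩ : p.primeCompl),
      φ b - floc (IsLocalization.mk' (Localization.AtPrime p) a (⟨s, hs⟩ : p.primeCompl)),
      ?_, by ring⟩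
    refine Ideal.mem_sInf.mpr ?_
    rintro J ⟨-, hJmax⟩
    obtain ⟨q, hqp, hqc, hJeq⟩ := aux_maximal_structure f hint p J hJmax
    have hmem : φ (f s * b - f a) ∈ q.map φ :=
      Ideal.mem_map_of_mem φ (hq q hqp hqc)
    have h2 : floc (IsLocalization.mk' (Localization.AtPrime p) a
        (⟨s, hs⟩ : p.primeCompl)) * φ (f s) = φ (f a) := hkey a ⟨s, hs⟩
    have hc : φ (f s) * (φ b - floc (IsLocalization.mk' (Localization.AtPrime p) a
        (⟨s, hs⟩ : p.primeCompl))) = φ (f s * b - f a) := by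
      calc φ (f s) * (φ b - floc (IsLocalization.mk' (Localization.AtPrime p) a
            (⟨s, hs⟩ : p.primeCompl)))
          = φ (f s) * φ b - floc (IsLocalization.mk' (Localization.AtPrime p) a
            (⟨s, hs⟩ : p.primeCompl)) * φ (f s) := by ring
        _ = φ (f s * b) - φ (f a) := by rw [h2, ← map_mul]
        _ = φ (f s * b - f a) := by rw [map_sub]
    have hunit : IsUnit (φ (f s)) :=
      IsLocalization.map_units Bp (⟨f s, Submonoid.mem_map_of_mem _ hs⟩ : p.primeCompl.map f)
    haveI hqmapprime : (q.map φ).IsPrime :=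
      IsLocalization.isPrime_of_isPrime_disjoint (p.primeCompl.map f) Bp q hqp
        (aux_disjoint f p q hqc.le)
    rw [hJeq]
    rcases hqmapprime.mem_or_mem (hc ▸ hmem) with h | h
    · exact absurd (Ideal.eq_top_of_isUnit_mem _ h hunit) hqmapprime.ne_top
    · exact h

lemma aux_quotientMap_isIntegral {A B : Type*} [CommRing A] [CommRing B] {f : A →+* B}
    (hint : f.IsIntegral) {q : Ideal B} {J : Ideal A} (H : J ≤ q.comap f) :
    (Ideal.quotientMap q f H).IsIntegral := by
  intro x
  obtain ⟨x, rfl⟩ := Ideal.Quotient.mk_surjective x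
  obtain ⟨p, p_monic, hpx⟩ := hint x
  refine ⟨p.map (Ideal.Quotient.mk _), p_monic.map _, ?_⟩
  simpa only [Polynomial.hom_eval₂, Polynomial.eval₂_map, Ideal.quotientMap_comp_mk, map_zero] using
    congr_arg (Ideal.Quotient.mk q) hpx

set_option maxHeartbeats 1000000 in
set_option synthInstance.maxHeartbeats 400000 in
lemma aux_per_prime {k A B : Type*} [Field k] [IsAlgClosed k] [CharZero k]
    [CommRing A] [CommRing B] [Algebra k A] [Algebra k B] [Algebra.FiniteType k B]
    (f : A →ₐ[k] B) (hinj : Function.Injective f) (hint : f.toRingHom.IsIntegral)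
    (b : B)
    (Hhom : ∀ Φ₁ Φ₂ : B →ₐ[k] k, Φ₁.comp f = Φ₂.comp f → Φ₁ b = Φ₂ b)
    (p : Ideal A) [p.IsPrime] (q : Ideal B) [q.IsPrime]
    (hqc : q.comap f.toRingHom = p) :
    ∃ x y : A, y ∉ p ∧ f y * b - f x ∈ q := by
  have hle : p ≤ q.comap f.toRingHom := le_of_eq hqc.symm
  letI : Algebra (A ⧸ p) (B ⧸ q) := (Ideal.quotientMap q f.toRingHom hle).toAlgebra
  have halgmap : ∀ a : A, algebraMap (A ⧸ p) (B ⧸ q) (Ideal.Quotient.mk p a) =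
      Ideal.Quotient.mk q (f a) := fun a => Ideal.quotientMap_mk (H := hle)
  haveI : IsScalarTower k (A ⧸ p) (B ⧸ q) := IsScalarTower.of_algebraMap_eq fun c => by
    rw [IsScalarTower.algebraMap_apply k A (A ⧸ p), Ideal.Quotient.algebraMap_eq,
      IsScalarTower.algebraMap_apply k B (B ⧸ q), Ideal.Quotient.algebraMap_eq]
    rw [show (algebraMap (A ⧸ p) (B ⧸ q)) = Ideal.quotientMap q f.toRingHom hle from rfl]
    rw [Ideal.quotientMap_mk]
    rw [show f.toRingHom (algebraMap k A c) = algebraMap k B c from f.commutes c]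
  haveI : Algebra.IsIntegral (A ⧸ p) (B ⧸ q) := Algebra.isIntegral_def.mpr (aux_quotientMap_isIntegral hint hle)
  haveI : Algebra.FiniteType k (B ⧸ q) :=
    Algebra.FiniteType.of_surjective (Ideal.Quotient.mkₐ k q)
      (Ideal.Quotient.mkₐ_surjective k q)
  have hinj' : Function.Injective (algebraMap (A ⧸ p) (B ⧸ q)) :=
    Ideal.quotientMap_injective' (H := hle) (le_of_eq hqc)
  have hβ := aux_core (k := k) (R := A ⧸ p) (S := B ⧸ q)
      (K := FractionRing (A ⧸ p)) (F := FractionRing (B ⧸ q)) hinj'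
      (Ideal.Quotient.mk q b) ?_
  · obtain ⟨xb, yb, hyb, heq⟩ := hβ
    obtain ⟨x, rfl⟩ := Ideal.Quotient.mk_surjective xb
    obtain ⟨y, rfl⟩ := Ideal.Quotient.mk_surjective yb
    refine ⟨x, y, fun hyp => hyb (Ideal.Quotient.eq_zero_iff_mem.mpr hyp), ?_⟩
    rw [← Ideal.Quotient.eq_zero_iff_mem]
    rw [map_sub, map_mul]
    rw [show (Ideal.Quotient.mk q) (f y) =
      algebraMap (A ⧸ p) (B ⧸ q) (Ideal.Quotient.mk p y) from (halgmap y).symm]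
    rw [show (Ideal.Quotient.mk q) (f x) =
      algebraMap (A ⧸ p) (B ⧸ q) (Ideal.Quotient.mk p x) from (halgmap x).symm]
    rw [heq, sub_self]
  · intro Φ₁ Φ₂ hagree
    have := Hhom (Φ₁.comp (Ideal.Quotient.mkₐ k q)) (Φ₂.comp (Ideal.Quotient.mkₐ k q)) ?_
    · exact this
    · apply AlgHom.ext
      intro a
      show Φ₁ (Ideal.Quotient.mk q (f a)) = Φ₂ (Ideal.Quotient.mk q (f a))
      rw [← halgmap a]
      exact hagree (Ideal.Quotient.mk p a)

set_option synthInstance.maxHeartbeats 400000 in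
lemma aux_ext2 {k A B : Type*} [Field k] [IsAlgClosed k]
    [CommRing A] [CommRing B] [Algebra k A] [Algebra k B] [Algebra.FiniteType k B]
    (f : A →ₐ[k] B) (hinj : Function.Injective f) (hint : f.toRingHom.IsIntegral)
    (p : Ideal A) [p.IsPrime] (q : Ideal B) [q.IsPrime] (hqc : q.comap f.toRingHom = p)
    (ψ : A →ₐ[k] k) (hψ : ∀ a ∈ p, ψ a = 0) :
    ∃ Φ : B →ₐ[k] k, Φ.comp f = ψ ∧ ∀ z ∈ q, Φ z = 0 := by
  have hle : p ≤ q.comap f.toRingHom := le_of_eq hqc.symm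
  letI : Algebra (A ⧸ p) (B ⧸ q) := (Ideal.quotientMap q f.toRingHom hle).toAlgebra
  have halgmap : ∀ a : A, algebraMap (A ⧸ p) (B ⧸ q) (Ideal.Quotient.mk p a) =
      Ideal.Quotient.mk q (f a) := fun a => Ideal.quotientMap_mk (H := hle)
  haveI : IsScalarTower k (A ⧸ p) (B ⧸ q) := IsScalarTower.of_algebraMap_eq fun c => by
    rw [IsScalarTower.algebraMap_apply k A (A ⧸ p), Ideal.Quotient.algebraMap_eq,
      IsScalarTower.algebraMap_apply k B (B ⧸ q), Ideal.Quotient.algebraMap_eq]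
    rw [show (algebraMap (A ⧸ p) (B ⧸ q)) = Ideal.quotientMap q f.toRingHom hle from rfl]
    rw [Ideal.quotientMap_mk]
    rw [show f.toRingHom (algebraMap k A c) = algebraMap k B c from f.commutes c]
  haveI : Algebra.IsIntegral (A ⧸ p) (B ⧸ q) := Algebra.isIntegral_def.mpr (aux_quotientMap_isIntegral hint hle)
  haveI : Algebra.FiniteType k (B ⧸ q) :=
    Algebra.FiniteType.of_surjective (Ideal.Quotient.mkₐ k q)
      (Ideal.Quotient.mkₐ_surjective k q)
  have hinj' : Function.Injective (algebraMap (A ⧸ p) (B ⧸ q)) :=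
    Ideal.quotientMap_injective' (H := hle) (le_of_eq hqc)
  let φ : A ⧸ p →ₐ[k] k := Ideal.Quotient.liftₐ p ψ hψ
  have hφ : ∀ a : A, φ (Ideal.Quotient.mk p a) = ψ a := fun a => Ideal.Quotient.liftₐ_apply p ψ hψ a
  obtain ⟨Φbar, hΦbar⟩ := aux_extend_point (k := k) (R := A ⧸ p) (S := B ⧸ q) hinj' φ
  refine ⟨Φbar.comp (Ideal.Quotient.mkₐ k q), ?_, ?_⟩
  · apply AlgHom.ext
    intro a
    show Φbar (Ideal.Quotient.mk q (f a)) = ψ a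
    rw [← halgmap a, hΦbar, hφ]
  · intro z hz
    show Φbar (Ideal.Quotient.mk q z) = 0
    rw [Ideal.Quotient.eq_zero_iff_mem.mpr hz, map_zero]

lemma aux_key_s6 {k A B : Type*} [Field k] [IsAlgClosed k] [CharZero k]
    [CommRing A] [CommRing B] [Algebra k A] [Algebra k B]
    [Algebra.FiniteType k A] [Algebra.FiniteType k B]
    (f : A →ₐ[k] B) (hinj : Function.Injective f) (hint : f.toRingHom.IsIntegral)
    (b : B)
    (Hhom : ∀ Φ₁ Φ₂ : B →ₐ[k] k, Φ₁.comp f = Φ₂.comp f → Φ₁ b = Φ₂ b)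
    (p : Ideal A) [p.IsPrime] :
    ∃ a s : A, s ∉ p ∧ ∀ q : Ideal B, q.IsPrime → q.comap f.toRingHom = p →
      f s * b - f a ∈ q := by
  by_cases hex : ∃ q : Ideal B, q.IsPrime ∧ q.comap f.toRingHom = p
  · obtain ⟨q₀, hq₀, hq₀c⟩ := hex
    haveI := hq₀
    obtain ⟨x₀, y₀, hy₀, hmem₀⟩ := aux_per_prime f hinj hint b Hhom p q₀ hq₀c
    refine ⟨x₀, y₀, hy₀, ?_⟩
    intro q hq hqc
    haveI := hq
    obtain ⟨x, y, hy, hmem⟩ := aux_per_prime f hinj hint b Hhom p q hqc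
    -- the comparison element lies in `p`
    have hz : x₀ * y - x * y₀ ∈ p := by
      rw [← Ideal.Quotient.eq_zero_iff_mem]
      by_contra hzp
      obtain ⟨φ, hφ⟩ := aux_exists_point (k := k) (R := A ⧸ p) hzp
      set ψ : A →ₐ[k] k := φ.comp (Ideal.Quotient.mkₐ k p) with hψdef
      have hψ : ∀ a ∈ p, ψ a = 0 := fun a ha => by
        show φ (Ideal.Quotient.mk p a) = 0
        rw [Ideal.Quotient.eq_zero_iff_mem.mpr ha, map_zero]
      obtain ⟨Φ, hΦf, hΦq⟩ := aux_ext2 f hinj hint p q hqc ψ hψ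
      obtain ⟨Φ₀, hΦ₀f, hΦ₀q⟩ := aux_ext2 f hinj hint p q₀ hq₀c ψ hψ
      have hv : Φ b = Φ₀ b := Hhom Φ Φ₀ (hΦf.trans hΦ₀f.symm)
      have e1 : ψ y * Φ b = ψ x := by
        have := hΦq _ hmem
        rw [map_sub, map_mul, sub_eq_zero] at this
        rw [show Φ (f y) = ψ y from congrArg (fun g => g y) hΦf ▸ rfl] at this
        rw [show Φ (f x) = ψ x from congrArg (fun g => g x) hΦf ▸ rfl] at this
        exact this
      have e0 : ψ y₀ * Φ b = ψ x₀ := by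
        have := hΦ₀q _ hmem₀
        rw [map_sub, map_mul, sub_eq_zero] at this
        rw [show Φ₀ (f y₀) = ψ y₀ from congrArg (fun g => g y₀) hΦ₀f ▸ rfl] at this
        rw [show Φ₀ (f x₀) = ψ x₀ from congrArg (fun g => g x₀) hΦ₀f ▸ rfl] at this
        rw [← hv] at this
        exact this
      apply hφ
      show φ (Ideal.Quotient.mk p (x₀ * y - x * y₀)) = 0
      have : φ (Ideal.Quotient.mk p (x₀ * y - x * y₀)) = ψ (x₀ * y - x * y₀) := rfl
      rw [this, map_sub, map_mul, map_mul, ← e1, ← e0]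
      ring
    -- conclude
    have h1 : f y * (f y₀ * b - f x₀) ∈ q := by
      have e1 : f y * (f y₀ * b - f x₀) =
          f y₀ * (f y * b - f x) - f (x₀ * y - x * y₀) := by
        rw [map_sub, map_mul, map_mul]
        ring
      rw [e1]
      refine Ideal.sub_mem q (Ideal.mul_mem_left q _ hmem) ?_
      have : x₀ * y - x * y₀ ∈ q.comap f.toRingHom := by rw [hqc]; exact hz
      exact this
    have hfy : f y ∉ q := fun hmemy => hy (by rw [← hqc]; exact hmemy)
    rcases hq.mem_or_mem h1 with h | h
    · exact absurd h hfy
    · exact h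
  · exact ⟨0, 1, fun h1 => ‹p.IsPrime›.ne_top ((Ideal.eq_top_iff_one p).mpr h1),
      fun q hq hqc => absurd ⟨q, hq, hqc⟩ hex⟩

set_option maxHeartbeats 1000000 in
theorem seminormalizationMaxSet_eq' {k A B : Type*} [Field k] [IsAlgClosed k] [CharZero k]
    [CommRing A] [CommRing B] [IsReduced A] [IsReduced B]
    [Algebra k A] [Algebra k B] [Algebra.FiniteType k A] [Algebra.FiniteType k B]
    (f : A →ₐ[k] B) (hinj : Function.Injective f) (hfin : f.toRingHom.Finite) :
    seminormalizationMaxSet f.toRingHom = seminormalizationSet f.toRingHom := by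
  have hint : f.toRingHom.IsIntegral := hfin.to_isIntegral
  apply Set.Subset.antisymm
  · -- the hard inclusion
    intro b hb
    have Hhom : ∀ Φ₁ Φ₂ : B →ₐ[k] k, Φ₁.comp f = Φ₂.comp f → Φ₁ b = Φ₂ b := by
      intro Φ₁ Φ₂ hΦ
      have hsurj : Function.Surjective (Φ₁.comp f) := fun c =>
        ⟨algebraMap k A c, (Φ₁.comp f).commutes c⟩
      have hm : (RingHom.ker (Φ₁.comp f).toRingHom).IsMaximal :=
        RingHom.ker_isMaximal_of_surjective _ hsurj
      haveI := hm
      haveI : (RingHom.ker (Φ₁.comp f).toRingHom).IsPrime := hm.isPrime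
      obtain ⟨a, s, hs, hq⟩ :=
        (aux_semi_char f.toRingHom hint (RingHom.ker (Φ₁.comp f).toRingHom) b).mp (hb _)
      haveI hk1 : (RingHom.ker Φ₁.toRingHom).IsPrime := RingHom.ker_isPrime _
      haveI hk2 : (RingHom.ker Φ₂.toRingHom).IsPrime := RingHom.ker_isPrime _
      have hc1 : (RingHom.ker Φ₁.toRingHom).comap f.toRingHom =
          RingHom.ker (Φ₁.comp f).toRingHom := by
        ext a'
        simp only [Ideal.mem_comap, RingHom.mem_ker, AlgHom.toRingHom_eq_coe,
          RingHom.coe_coe, AlgHom.comp_apply]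
      have hc2 : (RingHom.ker Φ₂.toRingHom).comap f.toRingHom =
          RingHom.ker (Φ₁.comp f).toRingHom := by
        ext a'
        have h := AlgHom.congr_fun hΦ a'
        simp only [AlgHom.comp_apply] at h
        simp only [Ideal.mem_comap, RingHom.mem_ker, AlgHom.toRingHom_eq_coe,
          RingHom.coe_coe, AlgHom.comp_apply, h]
      have e1 := hq _ hk1 hc1
      have e2 := hq _ hk2 hc2
      rw [RingHom.mem_ker, map_sub, map_mul, sub_eq_zero] at e1 e2
      have h2 : ∀ a' : A, Φ₁ (f a') = Φ₂ (f a') := fun a' => by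
        have h := AlgHom.congr_fun hΦ a'
        simpa only [AlgHom.comp_apply] using h
      have hs0 : Φ₁ (f s) ≠ 0 := fun h0 => hs (by
        show (Φ₁.comp f) s = 0
        simpa only [AlgHom.comp_apply] using h0)
      apply mul_left_cancel₀ hs0
      have e1' : Φ₁ (f s) * Φ₁ b = Φ₁ (f a) := e1
      have e2' : Φ₂ (f s) * Φ₂ b = Φ₂ (f a) := e2
      rw [e1', h2 a, ← e2', h2 s]
    show ∀ (p : Ideal A) [p.IsPrime], _
    intro p hp
    haveI := hp
    exact (aux_semi_char f.toRingHom hint p b).mpr (aux_key_s6 f hinj hint b Hhom p)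
  · intro b hb
    show ∀ (m : Ideal A) [m.IsMaximal], _
    intro m hm
    haveI := hm
    haveI := hm.isPrime
    exact hb m

/-- Let `k` be an algebraically closed field of characteristic zero and `A ⊆ B` an extension
of finitely generated reduced `k`-algebras making `B` a finite `A`-module. Then
`A⁺ᵐᵃˣ_B = A⁺_B`: the seminormalization of `A` in `B` may be computed using only the
maximal ideals of `A`. -/
theorem seminormalizationMaxSet_eq {k A B : Type*} [Field k] [IsAlgClosed k] [CharZero k]
    [CommRing A] [CommRing B] [IsReduced A] [IsReduced B]
    [Algebra k A] [Algebra k B] [Algebra.FiniteType k A] [Algebra.FiniteType k B]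
    (f : A →ₐ[k] B) (hinj : Function.Injective f) (hfin : f.toRingHom.Finite) :
    seminormalizationMaxSet f.toRingHom = seminormalizationSet f.toRingHom := by
  exact seminormalizationMaxSet_eq' f hinj hfin
end
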